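/- arXiv:1709.03248 — 5 statements merged into one kernel-verified Lean document; each statement's English description precedes it below -/
import Mathlib

section
/- Let a, b, k > 0 and let (x, y) ∈ ℝ² with (x, y) ≠ (0, 0). Define γ = x²/a² + y²/b², the tangential heading ψ_T = atan2(b²·x, −a²·y) (the argument of the complex number −a²·y + i·b²·x), the offset angle ψ_O = arctan(k·(γ − 1)), and the desired heading ψ_D = ψ_T + ψ_O. Then the inner product of the gradient (2x/a², 2y/b²) with the unit heading vector (cos ψ_D, sin ψ_D) satisfies (2x/a²)·cos(ψ_D) + (2y/b²)·sin(ψ_D) = −2·√(x²/a⁴ + y²/b⁴)·sin(ψ_O). -/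
open Real

/-- The counter-clockwise tangential heading at `(x, y)`:
`atan2 (b² x, −a² y)`, i.e. the argument of the complex number `−a² y + i b² x`. -/
noncomputable def psiT (a b x y : ℝ) : ℝ :=
  Complex.arg ⟨-(a ^ 2) * y, b ^ 2 * x⟩

/-- The offset angle `ψ_O = arctan (k (γ − 1))` with `γ = x²/a² + y²/b²`. -/
noncomputable def psiO (a b k x y : ℝ) : ℝ :=
  Real.arctan (k * (x ^ 2 / a ^ 2 + y ^ 2 / b ^ 2 - 1))

/-- The desired heading `ψ_D = ψ_T + ψ_O`. -/
noncomputable def psiD (a b k x y : ℝ) : ℝ :=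
  psiT a b x y + psiO a b k x y

/-! Write half the gradient as the complex number `w = x/a² + i y/b²`. The tangent vector
`−a² y + i b² x` is `a²b² · i · w`, so `ψ_T = arg (i w)`: the heading is `w` turned a quarter
turn, followed by the offset `ψ_O`. Pairing `w` with the unit vector at angle `arg (i w) + ψ_O`
kills the component along `i w` and leaves `−‖w‖ sin ψ_O`, and `‖w‖ = √(x²/a⁴ + y²/b⁴)`. -/

open Complex

theorem re_mul_cos_add_im_mul_sin_arg_I_mul_add (w : ℂ) (φ : ℝ) :
    w.re * Real.cos (arg (I * w) + φ) + w.im * Real.sin (arg (I * w) + φ) =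
      -‖w‖ * Real.sin φ := by
  rcases eq_or_ne w 0 with rfl | hw
  · simp
  have hw_norm : ‖w‖ ≠ 0 := norm_ne_zero_iff.mpr hw
  have hsq : w.re ^ 2 + w.im ^ 2 = ‖w‖ ^ 2 := by rw [Complex.sq_norm, normSq_apply]; ring
  rw [Real.cos_add, Real.sin_add, cos_arg (mul_ne_zero I_ne_zero hw), sin_arg, norm_mul,
    norm_I, one_mul, I_mul_re, I_mul_im]
  field_simp
  linear_combination (-Real.sin φ) * hsq

theorem gradient_heading_inner_product_general
    (a b k : ℝ) (ha : 0 < a) (hb : 0 < b)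
    (x y : ℝ) :
    (2 * x / a ^ 2) * Real.cos (psiD a b k x y) +
      (2 * y / b ^ 2) * Real.sin (psiD a b k x y) =
    -2 * Real.sqrt (x ^ 2 / a ^ 4 + y ^ 2 / b ^ 4) * Real.sin (psiO a b k x y) := by
  set w : ℂ := ⟨x / a ^ 2, y / b ^ 2⟩
  have hpsiT : psiT a b x y = arg (I * w) := by
    rw [psiT, ← arg_real_mul (I * w) (by positivity : (0 : ℝ) < a ^ 2 * b ^ 2)]
    apply congrArg arg
    apply Complex.ext <;>
      simp only [re_ofReal_mul, im_ofReal_mul, I_mul_re, I_mul_im, w] <;> field_simp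
  have hnorm : √(x ^ 2 / a ^ 4 + y ^ 2 / b ^ 4) = ‖w‖ := by
    rw [norm_def, normSq_mk]
    ring_nf
  rw [psiD, hpsiT, hnorm]
  linear_combination 2 * re_mul_cos_add_im_mul_sin_arg_I_mul_add w (psiO a b k x y)

theorem gradient_heading_inner_product
    (a b k : ℝ) (ha : 0 < a) (hb : 0 < b) (hk : 0 < k)
    (x y : ℝ) (hxy : (x, y) ≠ (0, 0)) :
    (2 * x / a ^ 2) * Real.cos (psiD a b k x y) +
      (2 * y / b ^ 2) * Real.sin (psiD a b k x y) =
    -2 * Real.sqrt (x ^ 2 / a ^ 4 + y ^ 2 / b ^ 4) * Real.sin (psiO a b k x y) :=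
  gradient_heading_inner_product_general a b k ha hb x y
end

section
/- Let a, b, k > 0 and let (x, y) ∈ ℝ² with (x, y) ≠ (0, 0). Define γ = x²/a² + y²/b², ψ_T = atan2(b²·x, −a²·y), ψ_O = arctan(k·(γ − 1)), and ψ_D = ψ_T + ψ_O. Then the quantity G(x, y) = (2x/a²)·cos(ψ_D) + (2y/b²)·sin(ψ_D) is strictly positive if γ < 1, strictly negative if γ > 1, and zero if γ = 1. Consequently, (γ − 1)·G(x, y) < 0 whenever γ ≠ 1. -/
open Real

/-- The inner product of the gradient `(2x/a², 2y/b²)` with the unit heading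
vector `(cos ψ_D, sin ψ_D)`. -/
noncomputable def G (a b k x y : ℝ) : ℝ :=
  (2 * x / a ^ 2) * Real.cos (psiD a b k x y) +
    (2 * y / b ^ 2) * Real.sin (psiD a b k x y)

/-!
The unit heading `(cos ψ_T, sin ψ_T)` is `w / ‖w‖` with `w = (−a² y, b² x)`, which is orthogonal
to the gradient. By the angle-addition formula only the `sin ψ_O` term survives, giving
`G = −(2 ‖w‖ / (a² b²)) · sin ψ_O`; since `sin (arctan t) = t / √(1 + t²)`, `G` is a negative
multiple of `γ − 1`.
-/

theorem mul_cos_arg_add_add_mul_sin_arg_add {w : ℂ} (hw : w ≠ 0) (p q φ : ℝ) :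
    p * cos (w.arg + φ) + q * sin (w.arg + φ) =
      ((p * w.re + q * w.im) * cos φ + (q * w.re - p * w.im) * sin φ) / ‖w‖ := by
  have hr : ‖w‖ ≠ 0 := norm_ne_zero_iff.mpr hw
  rw [cos_add, sin_add, Complex.cos_arg hw, Complex.sin_arg]
  field_simp
  ring

lemma tangent_ne_zero {a b x y : ℝ} (ha : a ≠ 0) (hb : b ≠ 0) (hxy : (x, y) ≠ (0, 0)) :
    (⟨-(a ^ 2) * y, b ^ 2 * x⟩ : ℂ) ≠ 0 := by
  contrapose! hxy
  simp_all [Complex.ext_iff]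

lemma G_eq_neg_mul_sin_psiO {a b x y : ℝ} (k : ℝ) (ha : a ≠ 0) (hb : b ≠ 0)
    (hxy : (x, y) ≠ (0, 0)) :
    G a b k x y =
      -(2 * ‖(⟨-(a ^ 2) * y, b ^ 2 * x⟩ : ℂ)‖ / (a ^ 2 * b ^ 2)) * sin (psiO a b k x y) := by
  have hw := tangent_ne_zero ha hb hxy
  have hnorm : ‖(⟨-(a ^ 2) * y, b ^ 2 * x⟩ : ℂ)‖ ^ 2 = (a ^ 2 * y) ^ 2 + (b ^ 2 * x) ^ 2 := by
    rw [Complex.sq_norm, Complex.normSq_apply]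
    ring
  rw [G, psiD, psiT, mul_cos_arg_add_add_mul_sin_arg_add hw, div_eq_iff (norm_ne_zero_iff.mpr hw)]
  generalize ‖(⟨-(a ^ 2) * y, b ^ 2 * x⟩ : ℂ)‖ = r at hnorm ⊢
  field_simp
  linear_combination sin (psiO a b k x y) * hnorm

lemma exists_pos_G_eq_neg_mul {a b k x y : ℝ} (ha : a ≠ 0) (hb : b ≠ 0) (hk : 0 < k)
    (hxy : (x, y) ≠ (0, 0)) :
    ∃ C > 0, G a b k x y = -C * (x ^ 2 / a ^ 2 + y ^ 2 / b ^ 2 - 1) := by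
  have hw := norm_pos_iff.mpr (tangent_ne_zero ha hb hxy)
  refine ⟨2 * ‖(⟨-(a ^ 2) * y, b ^ 2 * x⟩ : ℂ)‖ / (a ^ 2 * b ^ 2) * k /
    √(1 + (k * (x ^ 2 / a ^ 2 + y ^ 2 / b ^ 2 - 1)) ^ 2), by positivity, ?_⟩
  rw [G_eq_neg_mul_sin_psiO k ha hb hxy, psiO, sin_arctan]
  ring

theorem gradient_heading_inner_product_sign
    (a b k : ℝ) (ha : 0 < a) (hb : 0 < b) (hk : 0 < k)
    (x y : ℝ) (hxy : (x, y) ≠ (0, 0)) :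
    (x ^ 2 / a ^ 2 + y ^ 2 / b ^ 2 < 1 → 0 < G a b k x y) ∧
    (1 < x ^ 2 / a ^ 2 + y ^ 2 / b ^ 2 → G a b k x y < 0) ∧
    (x ^ 2 / a ^ 2 + y ^ 2 / b ^ 2 = 1 → G a b k x y = 0) ∧
    (x ^ 2 / a ^ 2 + y ^ 2 / b ^ 2 ≠ 1 →
      (x ^ 2 / a ^ 2 + y ^ 2 / b ^ 2 - 1) * G a b k x y < 0) := by
  obtain ⟨C, hC, hG⟩ := exists_pos_G_eq_neg_mul ha.ne' hb.ne' hk hxy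
  rw [hG]
  refine ⟨fun h ↦ by nlinarith, fun h ↦ by nlinarith, fun h ↦ by simp [h], fun h ↦ ?_⟩
  have hsq : 0 < (x ^ 2 / a ^ 2 + y ^ 2 / b ^ 2 - 1) ^ 2 := by
    positivity [sub_ne_zero.mpr h]
  nlinarith
end

section
/- (Proposition 1) Let a > b > 0, V > 0, k > 0, and let x, y : ℝ → ℝ be differentiable functions such that (x(t), y(t)) ≠ (0, 0) for all t ≥ 0 and such that ẋ(t) = V·cos(ψ_D(x(t), y(t))) and ẏ(t) = V·sin(ψ_D(x(t), y(t))) for all t ≥ 0. Then the agent asymptotically converges to the desired ellipse: x(t)²/a² + y(t)²/b² → 1 as t → ∞. -/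
open Real

/-! Along a trajectory, `γ = x²/a² + y²/b²` satisfies `γ' = ∇γ · v = -V ‖∇γ‖ sin ψ_O`, since the
tangential heading is orthogonal to `∇γ`. As `sin (arctan s) = s / √(1 + s²)`, this reads
`(γ - 1)' = -c (γ - 1)` with `c > 0`. Such an equation lets `γ - 1` neither change sign nor grow,
so `γ` stays away from `0` and `γ - 1` stays bounded; there `‖∇γ‖` and `1 / √(1 + k² (γ - 1)²)`
are bounded below, hence so is `c`, and `γ - 1` decays exponentially. -/

open Filter Topology

theorem min_le_of_hasDerivAt_neg_mul_self {u c : ℝ → ℝ} (hc : ∀ t, 0 ≤ t → 0 < c t)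
    (hu : ∀ t, 0 ≤ t → HasDerivAt u (-(c t * u t)) t) {t : ℝ} (ht : 0 ≤ t) :
    min (u 0) 0 ≤ u t := by
  refine le_of_forall_lt_imp_le_of_dense fun L hL => ?_
  -- at a contact point `u s = L < 0` we have `u' s > 0`, so `u` cannot cross below `L`
  have hL0 : L < 0 := hL.trans_le (min_le_right _ _)
  have hfence := image_le_of_deriv_right_lt_deriv_boundary (a := 0) (b := t) (f := fun s => -u s)
    (B := fun _ => -L) (B' := 0)
    (fun s hs => (hu s hs.1).continuousAt.neg.continuousWithinAt)
    (fun s hs => (hu s hs.1).neg.hasDerivWithinAt)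
    (neg_le_neg (hL.trans_le (min_le_left _ _)).le) (fun _ => hasDerivAt_const _ (-L))
    (fun s hs hsL => by
      simpa [neg_inj.mp hsL] using mul_neg_of_pos_of_neg (hc s hs.1) hL0)
    ⟨ht, le_rfl⟩
  exact neg_le_neg_iff.mp hfence

theorem abs_le_abs_of_hasDerivAt_neg_mul_self {u c : ℝ → ℝ} (hc : ∀ t, 0 ≤ t → 0 < c t)
    (hu : ∀ t, 0 ≤ t → HasDerivAt u (-(c t * u t)) t) {t : ℝ} (ht : 0 ≤ t) :
    |u t| ≤ |u 0| := by
  have h0 : -|u 0| ≤ 0 := neg_nonpos.mpr (abs_nonneg _)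
  have hlow : -|u 0| ≤ u t :=
    (le_min (neg_abs_le _) h0).trans (min_le_of_hasDerivAt_neg_mul_self hc hu ht)
  have hup : -|u 0| ≤ -u t :=
    (le_min (neg_le_neg (le_abs_self _)) h0).trans <| min_le_of_hasDerivAt_neg_mul_self (u := -u) hc
      (fun s hs => by simpa only [Pi.neg_apply, mul_neg, neg_neg] using (hu s hs).neg) ht
  exact abs_le.mpr ⟨hlow, by linarith⟩

theorem tendsto_zero_of_hasDerivAt_neg_mul_self {u c : ℝ → ℝ} {c₀ : ℝ} (hc₀ : 0 < c₀)
    (hc : ∀ t, 0 ≤ t → c₀ ≤ c t) (hu : ∀ t, 0 ≤ t → HasDerivAt u (-(c t * u t)) t) :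
    Tendsto u atTop (𝓝 0) := by
  -- the weighted `w` solves the same kind of equation, with rate `c - c₀ / 2 > 0`
  set w : ℝ → ℝ := fun t => exp (c₀ / 2 * t) * u t
  have hw : ∀ t, 0 ≤ t → HasDerivAt w (-((c t - c₀ / 2) * w t)) t := fun t ht => by
    refine (((hasDerivAt_id' t).const_mul (c₀ / 2)).exp.fun_mul (hu t ht)).congr_deriv ?_
    ring
  have hbound : ∀ t, 0 ≤ t → |u t| ≤ |u 0| * exp (-(c₀ / 2 * t)) := fun t ht => by
    have := abs_le_abs_of_hasDerivAt_neg_mul_self (fun s hs => by linarith [hc s hs]) hw ht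
    simp only [w, abs_mul, abs_exp, mul_zero, exp_zero, one_mul] at this
    rw [exp_neg, ← div_eq_mul_inv, le_div_iff₀ (exp_pos _)]
    linarith
  have hdecay : Tendsto (fun t => |u 0| * exp (-(c₀ / 2 * t))) atTop (𝓝 0) := by
    simpa using (tendsto_exp_neg_atTop_nhds_zero.comp
      (tendsto_id.const_mul_atTop (half_pos hc₀))).const_mul |u 0|
  exact squeeze_zero_norm' (eventually_atTop.mpr ⟨0, hbound⟩) hdecay

theorem sq_div_add_sq_div_pos {α β p q : ℝ} (hα : 0 < α) (hβ : 0 < β) (hpq : (p, q) ≠ (0, 0)) :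
    0 < p ^ 2 / α + q ^ 2 / β := by
  rcases not_and_or.mp (mt Prod.ext_iff.mpr hpq) with hp | hq <;> positivity

noncomputable def ellipseLevel (a b p q : ℝ) : ℝ := p ^ 2 / a ^ 2 + q ^ 2 / b ^ 2

theorem gradient_inner_heading {a b p q : ℝ} (k : ℝ) (ha : a ≠ 0) (hb : b ≠ 0)
    (hpq : (p, q) ≠ (0, 0)) :
    p / a ^ 2 * cos (psiD a b k p q) + q / b ^ 2 * sin (psiD a b k p q)
      = -(sin (psiO a b k p q) * √(p ^ 2 / a ^ 4 + q ^ 2 / b ^ 4)) := by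
  -- `z` is `a² b² ∇γ / 2` turned by a quarter turn, and `√(p²/a⁴ + q²/b⁴) = ‖∇γ‖ / 2`
  set z : ℂ := ⟨-(a ^ 2) * q, b ^ 2 * p⟩
  have hr : 0 < p ^ 2 / a ^ 4 + q ^ 2 / b ^ 4 :=
    sq_div_add_sq_div_pos (by positivity) (by positivity) hpq
  have hz : ‖z‖ = a ^ 2 * b ^ 2 * √(p ^ 2 / a ^ 4 + q ^ 2 / b ^ 4) := by
    rw [Complex.norm_def, Complex.normSq_mk, ← abs_of_pos (by positivity : 0 < a ^ 2 * b ^ 2),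
      ← sqrt_sq_eq_abs, ← sqrt_mul (sq_nonneg _)]
    congr 1
    field_simp
    ring
  have hz0 : z ≠ 0 := norm_ne_zero_iff.mp (by rw [hz]; positivity)
  have hcos : cos (psiT a b p q) = -(a ^ 2 * q) / ‖z‖ := by
    rw [psiT, Complex.cos_arg hz0]; simp [z]
  have hsin : sin (psiT a b p q) = b ^ 2 * p / ‖z‖ := Complex.sin_arg z
  have hr2 := sq_sqrt hr.le
  set r := √(p ^ 2 / a ^ 4 + q ^ 2 / b ^ 4)
  have hr0 : r ≠ 0 := (sqrt_pos.mpr hr).ne'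
  rw [psiD, cos_add, sin_add, hcos, hsin, hz]
  field_simp at hr2 ⊢
  linear_combination sin (psiO a b k p q) * hr2

noncomputable def contractionRate (a b V k p q : ℝ) : ℝ :=
  2 * V * k * √(p ^ 2 / a ^ 4 + q ^ 2 / b ^ 4) / √(1 + (k * (ellipseLevel a b p q - 1)) ^ 2)

theorem contractionRate_pos {a b V k p q : ℝ} (ha : a ≠ 0) (hb : b ≠ 0) (hV : 0 < V) (hk : 0 < k)
    (hpq : (p, q) ≠ (0, 0)) : 0 < contractionRate a b V k p q := by
  have hnormal := sqrt_pos.mpr <| sq_div_add_sq_div_pos (by positivity : (0:ℝ) < a ^ 4)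
    (by positivity : (0:ℝ) < b ^ 4) hpq
  unfold contractionRate
  positivity

theorem le_contractionRate {a b V k p q m M : ℝ} (hb : 0 < b) (hab : b ≤ a) (hV : 0 ≤ V)
    (hk : 0 ≤ k) (hm : m ≤ ellipseLevel a b p q) (hM : |ellipseLevel a b p q - 1| ≤ M) :
    2 * V * k * √(m / a ^ 2) / √(1 + (k * M) ^ 2) ≤ contractionRate a b V k p q := by
  have ha : 0 < a := hb.trans_le hab
  have hnormal : m / a ^ 2 ≤ p ^ 2 / a ^ 4 + q ^ 2 / b ^ 4 := by
    calc m / a ^ 2 ≤ ellipseLevel a b p q / a ^ 2 := by gcongr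
      _ = p ^ 2 / a ^ 4 + q ^ 2 / (a ^ 2 * b ^ 2) := by unfold ellipseLevel; field_simp
      _ ≤ p ^ 2 / a ^ 4 + q ^ 2 / b ^ 4 := by gcongr; nlinarith [mul_le_mul hab hab hb.le ha.le]
  have hbounded : (k * (ellipseLevel a b p q - 1)) ^ 2 ≤ (k * M) ^ 2 := by
    rw [mul_pow, mul_pow]
    exact mul_le_mul_of_nonneg_left (sq_le_sq' (neg_le_of_abs_le hM) (le_of_abs_le hM))
      (sq_nonneg k)
  unfold contractionRate
  gcongr

theorem hasDerivAt_ellipseLevel_sub_one {a b V k : ℝ} {x y : ℝ → ℝ} {t : ℝ} (ha : a ≠ 0)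
    (hb : b ≠ 0) (hne : (x t, y t) ≠ (0, 0))
    (hx : HasDerivAt x (V * cos (psiD a b k (x t) (y t))) t)
    (hy : HasDerivAt y (V * sin (psiD a b k (x t) (y t))) t) :
    HasDerivAt (fun s => ellipseLevel a b (x s) (y s) - 1)
      (-(contractionRate a b V k (x t) (y t) * (ellipseLevel a b (x t) (y t) - 1))) t := by
  have hlevel := (((hx.pow 2).div_const (a ^ 2)).add ((hy.pow 2).div_const (b ^ 2))).sub_const 1
  refine hlevel.congr_deriv ?_
  have hheading := gradient_inner_heading k ha hb hne
  rw [psiO, sin_arctan] at hheading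
  calc _ = 2 * V * (x t / a ^ 2 * cos (psiD a b k (x t) (y t))
          + y t / b ^ 2 * sin (psiD a b k (x t) (y t))) := by push_cast; ring
    _ = _ := by rw [hheading, contractionRate, ellipseLevel]; ring

theorem agent_converges_to_ellipse
    (a b V k : ℝ) (hab : b < a) (hb : 0 < b) (hV : 0 < V) (hk : 0 < k)
    (x y : ℝ → ℝ) (hx : Differentiable ℝ x) (hy : Differentiable ℝ y)
    (hne : ∀ t : ℝ, 0 ≤ t → (x t, y t) ≠ (0, 0))
    (hxd : ∀ t : ℝ, 0 ≤ t → deriv x t = V * Real.cos (psiD a b k (x t) (y t)))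
    (hyd : ∀ t : ℝ, 0 ≤ t → deriv y t = V * Real.sin (psiD a b k (x t) (y t))) :
    Filter.Tendsto (fun t => x t ^ 2 / a ^ 2 + y t ^ 2 / b ^ 2)
      Filter.atTop (nhds 1) := by
  have ha : 0 < a := hb.trans hab
  set u : ℝ → ℝ := fun t => ellipseLevel a b (x t) (y t) - 1
  set c : ℝ → ℝ := fun t => contractionRate a b V k (x t) (y t)
  have hu : ∀ t, 0 ≤ t → HasDerivAt u (-(c t * u t)) t := fun t ht =>
    hasDerivAt_ellipseLevel_sub_one ha.ne' hb.ne' (hne t ht)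
      (hxd t ht ▸ (hx t).hasDerivAt) (hyd t ht ▸ (hy t).hasDerivAt)
  have hc : ∀ t, 0 ≤ t → 0 < c t := fun t ht =>
    contractionRate_pos ha.ne' hb.ne' hV hk (hne t ht)
  set m := min (ellipseLevel a b (x 0) (y 0)) 1
  have hm : 0 < m :=
    lt_min (sq_div_add_sq_div_pos (by positivity) (by positivity) (hne 0 le_rfl)) one_pos
  have hlevel : ∀ t, 0 ≤ t → m ≤ ellipseLevel a b (x t) (y t) := fun t ht => by
    have hmin := min_le_of_hasDerivAt_neg_mul_self hc hu ht
    have hm_eq : m = min (u 0) 0 + 1 := by rw [← min_add_add_right]; simp [u, m]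
    simp only [u] at hmin
    linarith
  have hrate : ∀ t, 0 ≤ t → 2 * V * k * √(m / a ^ 2) / √(1 + (k * |u 0|) ^ 2) ≤ c t :=
    fun t ht => le_contractionRate hb hab.le hV.le hk.le (hlevel t ht)
      (abs_le_abs_of_hasDerivAt_neg_mul_self hc hu ht)
  have hm' : 0 < √(m / a ^ 2) := sqrt_pos.mpr (by positivity)
  have hdecay := tendsto_zero_of_hasDerivAt_neg_mul_self (by positivity) hrate hu
  simpa [u, ellipseLevel] using hdecay.add_const 1
end

section
/- Let a > b > 0, V > 0, k > 0, and let x, y : ℝ → ℝ be differentiable functions such that (x(t), y(t)) ≠ (0, 0) for all t ≥ 0 and such that ẋ(t) = V·cos(ψ_D(x(t), y(t))) and ẏ(t) = V·sin(ψ_D(x(t), y(t))) for all t ≥ 0. If the initial position lies on the desired ellipse, x(0)²/a² + y(0)²/b² = 1, then x(t)²/a² + y(t)²/b² = 1 for all t ≥ 0; that is, the desired ellipse is a positively invariant set of the closed-loop dynamics. -/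
open Real

open Set

/-! Let `r = x²/a² + y²/b² - 1`, so `ṙ = V ∇r · (cos ψ_D, sin ψ_D)`. The tangential heading
`ψ_T` points along `(-a²y, b²x)`, which is orthogonal to `∇r = (2x/a², 2y/b²)`; expanding
`ψ_D = ψ_T + ψ_O` therefore leaves `R ṙ = -2V Q sin (arctan (k r))` with `R = ‖(-a²y, b²x)‖` and
`Q = b²x²/a² + a²y²/b² ≥ 0`. As `r sin (arctan (k r)) ≥ 0`, this gives `r ṙ ≤ 0`, so `r²` is
nonincreasing from `r(0)² = 0` and stays `0`. -/

noncomputable def ellipseResidual (a b X Y : ℝ) : ℝ :=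
  X ^ 2 / a ^ 2 + Y ^ 2 / b ^ 2 - 1

theorem Real.mul_sin_arctan_mul_nonneg {k : ℝ} (hk : 0 ≤ k) (u : ℝ) :
    0 ≤ u * sin (arctan (k * u)) := by
  rw [sin_arctan]
  have : u * (k * u / √(1 + (k * u) ^ 2)) = k * u ^ 2 / √(1 + (k * u) ^ 2) := by ring
  rw [this]
  positivity

theorem eq_zero_of_mul_hasDerivAt_nonpos {g g' : ℝ → ℝ} {t₀ : ℝ}
    (hg : ∀ t ∈ Ici t₀, HasDerivAt g (g' t) t) (hgg' : ∀ t ∈ Ici t₀, g t * g' t ≤ 0)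
    (h₀ : g t₀ = 0) : ∀ t ∈ Ici t₀, g t = 0 := by
  have hsq : AntitoneOn (fun t ↦ g t ^ 2) (Ici t₀) := by
    refine antitoneOn_of_hasDerivWithinAt_nonpos (f' := fun t ↦ 2 * g t * g' t) (convex_Ici t₀)
      (fun t ht ↦ ((hg t ht).continuousAt.pow 2).continuousWithinAt) (fun t ht ↦ ?_)
      (fun t ht ↦ ?_)
    · rw [interior_Ici] at ht
      refine (((hg t (Ioi_subset_Ici_self ht)).fun_pow 2).congr_deriv ?_).hasDerivWithinAt
      norm_num
    · rw [interior_Ici] at ht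
      linarith [hgg' t (Ioi_subset_Ici_self ht)]
  intro t ht
  have hsq_le : g t ^ 2 ≤ g t₀ ^ 2 := hsq self_mem_Ici ht ht
  rw [h₀, zero_pow two_ne_zero] at hsq_le
  exact sq_nonpos_iff _ |>.1 hsq_le

theorem HasDerivAt.ellipseResidual {x y : ℝ → ℝ} {x' y' t : ℝ} (hx : HasDerivAt x x' t)
    (hy : HasDerivAt y y' t) (a b : ℝ) :
    HasDerivAt (fun s ↦ ellipseResidual a b (x s) (y s))
      (2 * x t / a ^ 2 * x' + 2 * y t / b ^ 2 * y') t := by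
  refine ((((hx.fun_pow 2).div_const (a ^ 2)).add
    ((hy.fun_pow 2).div_const (b ^ 2))).sub_const 1).congr_deriv ?_
  norm_num
  ring

theorem norm_mul_gradient_dot_heading {a b : ℝ} (ha : a ≠ 0) (hb : b ≠ 0) (k X Y : ℝ) :
    ‖(⟨-(a ^ 2) * Y, b ^ 2 * X⟩ : ℂ)‖ *
        (2 * X / a ^ 2 * cos (psiD a b k X Y) + 2 * Y / b ^ 2 * sin (psiD a b k X Y)) =
      -2 * (b ^ 2 * X ^ 2 / a ^ 2 + a ^ 2 * Y ^ 2 / b ^ 2) * sin (psiO a b k X Y) := by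
  have hc := Complex.norm_mul_cos_arg ⟨-(a ^ 2) * Y, b ^ 2 * X⟩
  have hs := Complex.norm_mul_sin_arg ⟨-(a ^ 2) * Y, b ^ 2 * X⟩
  rw [psiD, cos_add, sin_add, psiT]
  generalize ‖(⟨-(a ^ 2) * Y, b ^ 2 * X⟩ : ℂ)‖ = N at *
  generalize Complex.arg ⟨-(a ^ 2) * Y, b ^ 2 * X⟩ = θ at *
  generalize psiO a b k X Y = φ
  dsimp only at hc hs
  field_simp
  linear_combination (X * b ^ 2 * cos φ + a ^ 2 * Y * sin φ) * hc
    + (a ^ 2 * Y * cos φ - X * b ^ 2 * sin φ) * hs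

theorem ellipseResidual_mul_gradient_dot_heading_nonpos {a b k : ℝ} (ha : a ≠ 0) (hb : b ≠ 0)
    (hk : 0 ≤ k) (X Y : ℝ) :
    ellipseResidual a b X Y *
      (2 * X / a ^ 2 * cos (psiD a b k X Y) + 2 * Y / b ^ 2 * sin (psiD a b k X Y)) ≤ 0 := by
  rcases eq_or_ne (X, Y) (0, 0) with hXY | hXY
  · simp_all
  have hN : 0 < ‖(⟨-(a ^ 2) * Y, b ^ 2 * X⟩ : ℂ)‖ := by
    refine norm_pos_iff.2 fun hz ↦ hXY ?_
    have := Complex.ext_iff.1 hz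
    simp_all
  refine nonpos_of_mul_nonpos_right ?_ hN
  have hQ : 0 ≤ b ^ 2 * X ^ 2 / a ^ 2 + a ^ 2 * Y ^ 2 / b ^ 2 := by positivity
  calc _ = -2 * (b ^ 2 * X ^ 2 / a ^ 2 + a ^ 2 * Y ^ 2 / b ^ 2) *
        (ellipseResidual a b X Y * sin (arctan (k * ellipseResidual a b X Y))) := by
        rw [mul_left_comm, norm_mul_gradient_dot_heading ha hb, psiO, ellipseResidual]
        ring
    _ ≤ 0 := mul_nonpos_of_nonpos_of_nonneg (by linarith) (mul_sin_arctan_mul_nonneg hk _)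

theorem ellipse_positively_invariant_general
    (a b V k : ℝ) (hab : b < a) (hb : 0 < b) (hV : 0 < V) (hk : 0 < k)
    (x y : ℝ → ℝ) (hx : Differentiable ℝ x) (hy : Differentiable ℝ y)
    (hxd : ∀ t : ℝ, 0 ≤ t → deriv x t = V * Real.cos (psiD a b k (x t) (y t)))
    (hyd : ∀ t : ℝ, 0 ≤ t → deriv y t = V * Real.sin (psiD a b k (x t) (y t)))
    (h0 : x 0 ^ 2 / a ^ 2 + y 0 ^ 2 / b ^ 2 = 1) :
    ∀ t : ℝ, 0 ≤ t → x t ^ 2 / a ^ 2 + y t ^ 2 / b ^ 2 = 1 := by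
  have ha : a ≠ 0 := (hb.trans hab).ne'
  have hresidual := eq_zero_of_mul_hasDerivAt_nonpos
    (fun t _ ↦ (hx t).hasDerivAt.ellipseResidual (hy t).hasDerivAt a b) (fun t ht ↦ ?_)
    (sub_eq_zero.2 h0)
  · exact fun t ht ↦ sub_eq_zero.1 (hresidual t ht)
  rw [hxd t ht, hyd t ht]
  linarith [mul_nonpos_of_nonneg_of_nonpos hV.le
    (ellipseResidual_mul_gradient_dot_heading_nonpos ha hb.ne' hk.le (x t) (y t))]

theorem ellipse_positively_invariant
    (a b V k : ℝ) (hab : b < a) (hb : 0 < b) (hV : 0 < V) (hk : 0 < k)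
    (x y : ℝ → ℝ) (hx : Differentiable ℝ x) (hy : Differentiable ℝ y)
    (hne : ∀ t : ℝ, 0 ≤ t → (x t, y t) ≠ (0, 0))
    (hxd : ∀ t : ℝ, 0 ≤ t → deriv x t = V * Real.cos (psiD a b k (x t) (y t)))
    (hyd : ∀ t : ℝ, 0 ≤ t → deriv y t = V * Real.sin (psiD a b k (x t) (y t)))
    (h0 : x 0 ^ 2 / a ^ 2 + y 0 ^ 2 / b ^ 2 = 1) :
    ∀ t : ℝ, 0 ≤ t → x t ^ 2 / a ^ 2 + y t ^ 2 / b ^ 2 = 1 :=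
  ellipse_positively_invariant_general a b V k hab hb hV hk x y hx hy hxd hyd h0
end

section
/- Let l1, l2, d_s > 0 and set L1 = l1 + 2·d_s, L2 = l2 + 2·d_s, a = L1/√2, b = L2/√2. Then every point (x, y) on the ellipse x²/a² + y²/b² = 1 has Euclidean distance at least d_s from the rectangle R = [−l1/2, l1/2] × [−l2/2, l2/2]; that is, for every (u, v) ∈ R, √((x − u)² + (y − v)²) ≥ d_s. Hence the elliptical path circumscribing the enlarged (l1 + 2d_s) × (l2 + 2d_s) rectangle guarantees a minimum stand-off distance d_s from all targets contained in the l1 × l2 rectangle. -/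
open Real

theorem ellipse_standoff_distance
    (l1 l2 ds : ℝ) (hl1 : 0 < l1) (hl2 : 0 < l2) (hds : 0 < ds)
    (x y : ℝ)
    (hell : x ^ 2 / ((l1 + 2 * ds) / Real.sqrt 2) ^ 2 +
        y ^ 2 / ((l2 + 2 * ds) / Real.sqrt 2) ^ 2 = 1) :
    ∀ u v : ℝ, |u| ≤ l1 / 2 → |v| ≤ l2 / 2 →
      ds ≤ Real.sqrt ((x - u) ^ 2 + (y - v) ^ 2) := by
  intro u v hu hv
  set L1 := l1 + 2 * ds with hL1
  set L2 := l2 + 2 * ds with hL2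
  have hL1pos : 0 < L1 := by positivity
  have hL2pos : 0 < L2 := by positivity
  have h2 : (Real.sqrt 2) ^ 2 = 2 := Real.sq_sqrt (by norm_num)
  have e1 : (L1 / Real.sqrt 2) ^ 2 = L1 ^ 2 / 2 := by rw [div_pow, h2]
  have e2 : (L2 / Real.sqrt 2) ^ 2 = L2 ^ 2 / 2 := by rw [div_pow, h2]
  rw [e1, e2] at hell
  have hkey : L1 ^ 2 / 4 ≤ x ^ 2 ∨ L2 ^ 2 / 4 ≤ y ^ 2 := by
    by_contra h
    push_neg at h
    obtain ⟨h1, h2'⟩ := h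
    have d1 : x ^ 2 / (L1 ^ 2 / 2) < 1 / 2 := by
      rw [div_lt_iff₀ (by positivity)]
      nlinarith
    have d2 : y ^ 2 / (L2 ^ 2 / 2) < 1 / 2 := by
      rw [div_lt_iff₀ (by positivity)]
      nlinarith
    linarith
  rcases hkey with h | h
  · have hx : l1 / 2 + ds ≤ |x| := by
      have : L1 / 2 ≤ |x| := by nlinarith [sq_abs x, abs_nonneg x]
      linarith [this, show L1 / 2 = l1 / 2 + ds by rw [hL1]; ring]
    have hd : ds ≤ |x - u| := by
      have := abs_sub_abs_le_abs_sub x u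
      linarith
    calc ds ≤ |x - u| := hd
      _ = Real.sqrt ((x - u) ^ 2) := (Real.sqrt_sq_eq_abs _).symm
      _ ≤ Real.sqrt ((x - u) ^ 2 + (y - v) ^ 2) := Real.sqrt_le_sqrt (by linarith [sq_nonneg (y - v)])
  · have hy : l2 / 2 + ds ≤ |y| := by
      have : L2 / 2 ≤ |y| := by nlinarith [sq_abs y, abs_nonneg y]
      linarith [this, show L2 / 2 = l2 / 2 + ds by rw [hL2]; ring]
    have hd : ds ≤ |y - v| := by
      have := abs_sub_abs_le_abs_sub y v
      linarith
    calc ds ≤ |y - v| := hd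
      _ = Real.sqrt ((y - v) ^ 2) := (Real.sqrt_sq_eq_abs _).symm
      _ ≤ Real.sqrt ((x - u) ^ 2 + (y - v) ^ 2) := Real.sqrt_le_sqrt (by linarith [sq_nonneg (x - u)])
end
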